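/- arXiv:1602.04698 — 2 statements merged into one kernel-verified Lean document; each statement's English description precedes it below -/
import Mathlib

section
/- For every natural number n ≥ 3, the total graph of the cycle graph C_n on n vertices is isomorphic to the square of the cycle on 2n vertices, i.e. to the simple graph on ZMod (2n) in which distinct i and j are adjacent exactly when i − j ≡ ±1 or ±2 (mod 2n). Equivalently, T(C_n) has 2n vertices whose edge set is exactly the union of two vertex-disjoint n-cycles (on the odd-indexed and even-indexed vertices respectively) and a Hamiltonian cycle, edge-disjoint from both, that alternates between the two n-cycles. -/
/-- The total graph of a simple graph `G`: its vertices are `V ⊕ G.edgeSet`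
(vertex vertices and edge vertices); two distinct vertices are adjacent exactly when
the corresponding elements of `G` are adjacent vertices, edges sharing an endpoint,
or an incident vertex–edge pair. -/
def totalGraph {V : Type*} (G : SimpleGraph V) : SimpleGraph (V ⊕ G.edgeSet) where
  Adj x y :=
    match x, y with
    | Sum.inl u, Sum.inl w => G.Adj u w
    | Sum.inl u, Sum.inr e => u ∈ (e : Sym2 V)
    | Sum.inr e, Sum.inl u => u ∈ (e : Sym2 V)
    | Sum.inr e, Sum.inr f => e ≠ f ∧ ∃ u, u ∈ (e : Sym2 V) ∧ u ∈ (f : Sym2 V)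
  symm := ⟨by
    rintro (u | e) (w | f) h
    · exact h.symm
    · exact h
    · exact h
    · exact ⟨h.1.symm, h.2.imp fun u hu => ⟨hu.2, hu.1⟩⟩⟩
  loopless := ⟨by
    rintro (u | e) h
    · exact G.loopless.irrefl u h
    · exact h.1 rfl⟩

/-- The cycle graph `C n` on `ZMod n`: distinct `i, j` adjacent iff `i - j ≡ ±1 (mod n)`. -/
def cycleGraph (n : ℕ) : SimpleGraph (ZMod n) where
  Adj i j := i ≠ j ∧ (i - j = 1 ∨ j - i = 1)
  symm := ⟨fun i j h => ⟨h.1.symm, h.2.symm⟩⟩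
  loopless := ⟨fun i h => h.1 rfl⟩

/-- The square of the cycle on `ZMod n`: distinct `i, j` adjacent iff
`i - j ≡ ±1` or `±2 (mod n)`. -/
def cycleSquare (n : ℕ) : SimpleGraph (ZMod n) where
  Adj i j := i ≠ j ∧ (i - j = 1 ∨ j - i = 1 ∨ i - j = 2 ∨ j - i = 2)
  symm := ⟨fun i j h => ⟨h.1.symm, by tauto⟩⟩
  loopless := ⟨fun i h => h.1 rfl⟩

/-!
Send the vertex `i` of `C n` to `2 i` and the edge `{i, i + 1}` to `2 i + 1` in `ZMod (2 n)`.
Adjacent vertices and consecutive edges then differ by `±2`, an edge and its endpoints by `±1`,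
and parity rules out `±1` between two vertices or two edges and `±2` between a vertex and an
edge. The map is a bijection because for `n ≥ 3` the edges `{i, i + 1}` are pairwise distinct.
-/

namespace ZMod

variable {n : ℕ}

def double (n : ℕ) : ZMod n →+ ZMod (2 * n) :=
  ZMod.lift n ⟨(AddMonoidHom.mulLeft 2).comp (Int.castAddHom _), by
    show (2 : ZMod (2 * n)) * (n : ℤ) = 0
    exact_mod_cast ZMod.natCast_self (2 * n)⟩

theorem double_intCast (k : ℤ) : double n k = 2 * k :=
  ZMod.lift_coe n _ k

@[simp] theorem double_one : double n 1 = 2 := by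
  simpa using double_intCast (n := n) 1

theorem double_injective : Function.Injective (double n) := by
  refine (injective_iff_map_eq_zero _).2 fun a ha => ?_
  obtain ⟨k, rfl⟩ := ZMod.intCast_surjective a
  rw [double_intCast, ← Int.cast_two, ← Int.cast_mul, intCast_zmod_eq_zero_iff_dvd] at ha
  rw [intCast_zmod_eq_zero_iff_dvd]
  push_cast at ha
  exact (mul_dvd_mul_iff_left two_ne_zero).1 ha

theorem castHom_double (a : ZMod n) :
    castHom (dvd_mul_right 2 n) (ZMod 2) (double n a) = 0 := by
  obtain ⟨k, rfl⟩ := ZMod.intCast_surjective a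
  rw [double_intCast, map_mul, map_ofNat]
  exact zero_mul _

theorem double_ne_double_add_one (a b : ZMod n) : double n a ≠ double n b + 1 := fun h => by
  have := congrArg (castHom (dvd_mul_right 2 n) (ZMod 2)) h
  rw [map_add, castHom_double, castHom_double, map_one, zero_add] at this
  exact zero_ne_one this

theorem double_add_emod_two (k : ℤ) : double n (k / 2 : ℤ) + (k % 2 : ℤ) = k := by
  rw [double_intCast, ← Int.cast_two, ← Int.cast_mul, ← Int.cast_add, Int.mul_ediv_add_emod]

noncomputable def sumSelfEquivTwoMul (n : ℕ) : ZMod n ⊕ ZMod n ≃ ZMod (2 * n) :=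
  Equiv.ofBijective (Sum.elim (double n) (double n · + 1)) <| by
    refine ⟨?_, fun x => ?_⟩
    · rintro (a | a) (b | b) h <;>
        simp only [Sum.elim_inl, Sum.elim_inr, add_left_inj, double_injective.eq_iff] at h
      · rw [h]
      · exact absurd h (double_ne_double_add_one a b)
      · exact absurd h.symm (double_ne_double_add_one b a)
      · rw [h]
    · obtain ⟨k, rfl⟩ := intCast_surjective x
      rcases Int.emod_two_eq_zero_or_one k with hk | hk
      · exact ⟨.inl (k / 2 : ℤ), by simpa [hk] using double_add_emod_two k⟩
      · exact ⟨.inr (k / 2 : ℤ), by simpa [hk] using double_add_emod_two k⟩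

@[simp] theorem sumSelfEquivTwoMul_inl (a : ZMod n) :
    sumSelfEquivTwoMul n (.inl a) = double n a := rfl

@[simp] theorem sumSelfEquivTwoMul_inr (a : ZMod n) :
    sumSelfEquivTwoMul n (.inr a) = double n a + 1 := rfl

end ZMod

open ZMod

theorem cycleSquare_adj_add_right {m : ℕ} (a b c : ZMod m) :
    (cycleSquare m).Adj (a + c) (b + c) ↔ (cycleSquare m).Adj a b := by
  simp only [cycleSquare, add_sub_add_right_eq_sub, ne_eq, add_left_inj]

section Double

variable {n : ℕ}

theorem cycleSquare_adj_double (a b : ZMod n) :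
    (cycleSquare (2 * n)).Adj (double n a) (double n b) ↔ (cycleGraph n).Adj a b := by
  have h1 (d : ZMod n) : double n d ≠ 1 := by simpa using double_ne_double_add_one d 0
  have h2 (d : ZMod n) : double n d = 2 ↔ d = 1 := by rw [← double_one, double_injective.eq_iff]
  simp only [cycleSquare, cycleGraph, ← map_sub, double_injective.ne_iff, h1, h2, false_or]

theorem cycleSquare_adj_double_double_add_one (u i : ZMod n) :
    (cycleSquare (2 * n)).Adj (double n u) (double n i + 1) ↔ u = i ∨ u = i + 1 := by
  have e1 : double n u - (double n i + 1) = 1 ↔ u = i + 1 := by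
    refine ⟨fun h => double_injective ?_, fun h => ?_⟩
    · rw [map_add, double_one]; linear_combination h
    · rw [h, map_add, double_one]; ring
  have e2 : double n i + 1 - double n u = 1 ↔ u = i := by
    rw [sub_eq_iff_eq_add, add_comm 1, add_left_inj, double_injective.eq_iff, eq_comm]
  have e3 : double n u - (double n i + 1) ≠ 2 := fun h =>
    double_ne_double_add_one u (i + 1) (by rw [map_add, double_one]; linear_combination h)
  have e4 : double n i + 1 - double n u ≠ 2 := fun h =>
    double_ne_double_add_one (u + 1) i (by rw [map_add, double_one]; linear_combination -h)
  simp only [cycleSquare, ne_eq, double_ne_double_add_one, not_false_eq_true, true_and,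
    e1, e2, e3, e4, or_false]
  tauto

end Double

section CycleEdges

variable {n : ℕ} (h2 : (2 : ZMod n) ≠ 0)
include h2

theorem cycleGraph_adj_add_one (i : ZMod n) : (cycleGraph n).Adj i (i + 1) :=
  ⟨fun h => h2 (by linear_combination -2 * h), Or.inr (add_sub_cancel_left i 1)⟩

theorem sym2_mk_add_one_injective : Function.Injective fun i : ZMod n => s(i, i + 1) := by
  intro i j h
  rcases Sym2.eq_iff.1 h with ⟨hij, -⟩ | ⟨hij, hji⟩
  · exact hij
  · exact absurd (by linear_combination hji - hij) h2

theorem cycleGraph_edgeSet_eq_range :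
    (cycleGraph n).edgeSet = Set.range fun i : ZMod n => s(i, i + 1) := by
  ext e
  induction e using Sym2.ind with
  | h a b =>
    refine ⟨fun hab => ?_, ?_⟩
    · obtain ⟨-, h | h⟩ : (cycleGraph n).Adj a b := hab
      · exact ⟨b, show s(b, b + 1) = s(a, b) by rw [Sym2.eq_swap, ← h, add_sub_cancel]⟩
      · exact ⟨a, show s(a, a + 1) = s(a, b) by rw [← h, add_sub_cancel]⟩
    · rintro ⟨i, hi⟩
      rw [← hi]
      exact cycleGraph_adj_add_one h2 i

noncomputable def cycleGraphEdgeEquiv : ZMod n ≃ (cycleGraph n).edgeSet :=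
  (Equiv.ofInjective _ (sym2_mk_add_one_injective h2)).trans
    (Equiv.setCongr (cycleGraph_edgeSet_eq_range h2).symm)

@[simp] theorem coe_cycleGraphEdgeEquiv (i : ZMod n) :
    (cycleGraphEdgeEquiv h2 i : Sym2 (ZMod n)) = s(i, i + 1) := rfl

theorem totalGraph_cycleGraph_adj_inl_inr (u i : ZMod n) :
    (totalGraph (cycleGraph n)).Adj (.inl u) (.inr (cycleGraphEdgeEquiv h2 i)) ↔
      u = i ∨ u = i + 1 :=
  Sym2.mem_iff

theorem totalGraph_cycleGraph_adj_inr_inr (i j : ZMod n) :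
    (totalGraph (cycleGraph n)).Adj (.inr (cycleGraphEdgeEquiv h2 i))
      (.inr (cycleGraphEdgeEquiv h2 j)) ↔ (cycleGraph n).Adj i j := by
  show _ ≠ _ ∧ _ ↔ i ≠ j ∧ _
  rw [(cycleGraphEdgeEquiv h2).injective.ne_iff]
  refine and_congr_right fun hij => ?_
  simp only [coe_cycleGraphEdgeEquiv, Sym2.mem_iff, exists_eq_or_imp, exists_eq_left,
    sub_eq_iff_eq_add', add_left_inj, hij, hij.symm, false_or, or_false, eq_comm (a := i + 1)]

end CycleEdges

noncomputable def totalGraphCycleGraphIso {n : ℕ} (h2 : (2 : ZMod n) ≠ 0) :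
    totalGraph (cycleGraph n) ≃g cycleSquare (2 * n) where
  toEquiv := (Equiv.sumCongr (Equiv.refl _) (cycleGraphEdgeEquiv h2)).symm.trans
    (sumSelfEquivTwoMul n)
  map_rel_iff' {x y} := by
    obtain ⟨a, rfl⟩ := (Equiv.sumCongr (Equiv.refl _) (cycleGraphEdgeEquiv h2)).surjective x
    obtain ⟨b, rfl⟩ := (Equiv.sumCongr (Equiv.refl _) (cycleGraphEdgeEquiv h2)).surjective y
    simp only [Equiv.trans_apply, Equiv.symm_apply_apply]
    rcases a with u | i <;> rcases b with w | j <;>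
      simp only [Equiv.sumCongr_apply, Sum.map_inl, Sum.map_inr, Equiv.refl_apply,
        sumSelfEquivTwoMul_inl, sumSelfEquivTwoMul_inr]
    · exact cycleSquare_adj_double u w
    · rw [totalGraph_cycleGraph_adj_inl_inr]
      exact cycleSquare_adj_double_double_add_one u j
    · rw [SimpleGraph.adj_comm, (totalGraph _).adj_comm, totalGraph_cycleGraph_adj_inl_inr]
      exact cycleSquare_adj_double_double_add_one w i
    · rw [cycleSquare_adj_add_right, totalGraph_cycleGraph_adj_inr_inr]
      exact cycleSquare_adj_double i j

/-- For `n ≥ 3`, the total graph of the cycle `C n` is isomorphic to the square of the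
cycle on `2n` vertices. -/
theorem stmt_8 (n : ℕ) (hn : 3 ≤ n) :
    Nonempty (totalGraph (cycleGraph n) ≃g cycleSquare (2 * n)) := by
  refine ⟨totalGraphCycleGraphIso fun h => ?_⟩
  have hn2 : n ∣ 2 := (ZMod.natCast_eq_zero_iff 2 n).1 (by exact_mod_cast h)
  exact absurd (Nat.le_of_dvd two_pos hn2) (by omega)
end

section
/- For every natural number n ≥ 2, the total graph of the path graph P_n on n vertices is isomorphic to the square of the path on 2n − 1 vertices, i.e. to the simple graph on {0, 1, …, 2n − 2} in which distinct i and j are adjacent exactly when |i − j| ∈ {1, 2}. -/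
/-- The path graph `P n` on `Fin n`: distinct `i, j` adjacent iff `|i - j| = 1`. -/
def pathGraph' (n : ℕ) : SimpleGraph (Fin n) where
  Adj i j := (i : ℕ) + 1 = j ∨ (j : ℕ) + 1 = i
  symm := ⟨fun i j h => h.symm⟩
  loopless := ⟨fun i h => by omega⟩

/-- The square of the path on `Fin n`: distinct `i, j` adjacent iff `|i - j| ∈ {1, 2}`. -/
def pathSquare (n : ℕ) : SimpleGraph (Fin n) where
  Adj i j := (i : ℕ) + 1 = j ∨ (j : ℕ) + 1 = i ∨ (i : ℕ) + 2 = j ∨ (j : ℕ) + 2 = i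
  symm := ⟨fun i j h => by tauto⟩
  loopless := ⟨fun i h => by omega⟩
/-! Number the vertices of the total graph of `P n` by placing the vertex `u` at `2u` and the
edge `{i, i+1}` at `2i + 1`, between its endpoints. This is a bijection onto `{0, …, 2n - 2}`,
and two elements are adjacent in the total graph exactly when their positions differ by
`1` (a vertex and an incident edge) or by `2` (consecutive vertices, or consecutive edges). -/

namespace totalGraph

variable {V : Type*} {G : SimpleGraph V}

@[simp]
theorem adj_inl_inl {u w : V} : (totalGraph G).Adj (.inl u) (.inl w) ↔ G.Adj u w := Iff.rfl

@[simp]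
theorem adj_inl_inr {u : V} {e : G.edgeSet} :
    (totalGraph G).Adj (.inl u) (.inr e) ↔ u ∈ (e : Sym2 V) := Iff.rfl

@[simp]
theorem adj_inr_inl {e : G.edgeSet} {u : V} :
    (totalGraph G).Adj (.inr e) (.inl u) ↔ u ∈ (e : Sym2 V) := Iff.rfl

@[simp]
theorem adj_inr_inr {e f : G.edgeSet} :
    (totalGraph G).Adj (.inr e) (.inr f) ↔
      e ≠ f ∧ ∃ u, u ∈ (e : Sym2 V) ∧ u ∈ (f : Sym2 V) := Iff.rfl

end totalGraph

theorem pathSquare_adj {m : ℕ} {a b : Fin m} :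
    (pathSquare m).Adj a b ↔
      (a : ℕ) + 1 = b ∨ (b : ℕ) + 1 = a ∨ (a : ℕ) + 2 = b ∨ (b : ℕ) + 2 = a := Iff.rfl

namespace pathGraph'

variable {n : ℕ}

theorem adj_iff {a b : Fin n} : (pathGraph' n).Adj a b ↔ (a : ℕ) + 1 = b ∨ (b : ℕ) + 1 = a :=
  Iff.rfl

def edge (i : ℕ) (h : i + 1 < n) : (pathGraph' n).edgeSet :=
  ⟨s(⟨i, by omega⟩, ⟨i + 1, h⟩), Or.inl rfl⟩

theorem exists_eq_edge (e : (pathGraph' n).edgeSet) : ∃ i h, e = edge i h := by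
  obtain ⟨e, he⟩ := e
  induction e using Sym2.ind with
  | _ a b =>
    change (a : ℕ) + 1 = b ∨ (b : ℕ) + 1 = a at he
    rcases he with h | h
    · refine ⟨a, by omega, Subtype.ext (Sym2.eq_iff.2 (.inl ⟨rfl, Fin.ext h.symm⟩))⟩
    · refine ⟨b, by omega, Subtype.ext (Sym2.eq_iff.2 (.inr ⟨Fin.ext h.symm, rfl⟩))⟩

theorem mem_edge_iff {i : ℕ} {h : i + 1 < n} {u : Fin n} :
    u ∈ (edge i h : Sym2 (Fin n)) ↔ (u : ℕ) = i ∨ (u : ℕ) = i + 1 := by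
  simp [edge, Fin.ext_iff]

theorem edge_inj {i j : ℕ} {hi : i + 1 < n} {hj : j + 1 < n} :
    edge i hi = edge j hj ↔ i = j := by
  simp only [Subtype.ext_iff, edge, Sym2.eq_iff, Fin.mk.injEq]
  omega

theorem totalGraph_adj_edge_edge {i j : ℕ} {hi : i + 1 < n} {hj : j + 1 < n} :
    (totalGraph (pathGraph' n)).Adj (.inr (edge i hi)) (.inr (edge j hj)) ↔
      i + 1 = j ∨ j + 1 = i := by
  simp only [totalGraph.adj_inr_inr, ne_eq, edge_inj, mem_edge_iff]
  constructor
  · rintro ⟨hij, u, hu, hu'⟩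
    omega
  · rintro (rfl | rfl)
    · exact ⟨by omega, ⟨i + 1, hi⟩, .inr rfl, .inl rfl⟩
    · exact ⟨by omega, ⟨j + 1, hj⟩, .inl rfl, .inr rfl⟩

@[elab_as_elim]
theorem totalInduction {P : Fin n ⊕ (pathGraph' n).edgeSet → Prop} (vertex : ∀ u, P (.inl u))
    (edge : ∀ i h, P (.inr (edge i h))) (x : Fin n ⊕ (pathGraph' n).edgeSet) : P x := by
  rcases x with u | e
  · exact vertex u
  · obtain ⟨i, h, rfl⟩ := exists_eq_edge e
    exact edge i h

def totalIndex : Fin n ⊕ (pathGraph' n).edgeSet → ℕ :=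
  Sum.elim (fun u => 2 * u) fun e =>
    Sym2.lift ⟨fun a b : Fin n => (a : ℕ) + b, fun _ _ => add_comm _ _⟩ (e : Sym2 (Fin n))

@[simp]
theorem totalIndex_inl (u : Fin n) : totalIndex (.inl u) = 2 * u := rfl

@[simp]
theorem totalIndex_edge (i : ℕ) (h : i + 1 < n) : totalIndex (.inr (edge i h)) = 2 * i + 1 := by
  simp only [totalIndex, edge, Sum.elim_inr, Sym2.lift_mk]
  omega

theorem totalIndex_lt (x : Fin n ⊕ (pathGraph' n).edgeSet) : totalIndex x < 2 * n - 1 := by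
  induction x using totalInduction <;> simp only [totalIndex_inl, totalIndex_edge] <;> omega

theorem totalIndex_injective : Function.Injective (totalIndex (n := n)) := by
  intro x y hxy
  induction x using totalInduction <;> induction y using totalInduction <;>
    simp only [totalIndex_inl, totalIndex_edge] at hxy
  · exact congrArg _ (Fin.ext (by omega))
  · omega
  · omega
  · exact congrArg _ (edge_inj.2 (by omega))

theorem exists_totalIndex_eq {k : ℕ} (hk : k < 2 * n - 1) :
    ∃ x : Fin n ⊕ (pathGraph' n).edgeSet, totalIndex x = k := by
  obtain ⟨m, rfl | rfl⟩ := Nat.even_or_odd' k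
  · exact ⟨.inl ⟨m, by omega⟩, rfl⟩
  · exact ⟨.inr (edge m (by omega)), totalIndex_edge m _⟩

def toPathSquare (x : Fin n ⊕ (pathGraph' n).edgeSet) : Fin (2 * n - 1) :=
  ⟨totalIndex x, totalIndex_lt x⟩

@[simp]
theorem val_toPathSquare (x : Fin n ⊕ (pathGraph' n).edgeSet) :
    (toPathSquare x : ℕ) = totalIndex x := rfl

theorem toPathSquare_bijective : Function.Bijective (toPathSquare (n := n)) :=
  ⟨fun _ _ h => totalIndex_injective (congrArg Fin.val h), fun k =>
    (exists_totalIndex_eq k.2).imp fun _ h => Fin.ext h⟩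

theorem pathSquare_adj_toPathSquare (x y : Fin n ⊕ (pathGraph' n).edgeSet) :
    (pathSquare (2 * n - 1)).Adj (toPathSquare x) (toPathSquare y) ↔
      (totalGraph (pathGraph' n)).Adj x y := by
  induction x using totalInduction <;> induction y using totalInduction <;>
    simp only [pathSquare_adj, val_toPathSquare, totalIndex_inl, totalIndex_edge,
      totalGraph.adj_inl_inl, totalGraph.adj_inl_inr, totalGraph.adj_inr_inl,
      totalGraph_adj_edge_edge, mem_edge_iff, adj_iff] <;>
    omega

end pathGraph'

theorem stmt_9_general (n : ℕ) :
    Nonempty (totalGraph (pathGraph' n) ≃g pathSquare (2 * n - 1)) :=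
  ⟨⟨Equiv.ofBijective _ pathGraph'.toPathSquare_bijective,
    pathGraph'.pathSquare_adj_toPathSquare _ _⟩⟩

/-- For `n ≥ 2`, the total graph of the path `P n` is isomorphic to the square of the
path on `2n - 1` vertices. -/
theorem stmt_9 (n : ℕ) (hn : 2 ≤ n) :
    Nonempty (totalGraph (pathGraph' n) ≃g pathSquare (2 * n - 1)) :=
  stmt_9_general n
end
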